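/- Let S be a semiring. If γ_2 = id_S and δ = S×S, then S is additively cancellative, i.e., x + z = y + z implies x = y for all x, y, z ∈ S. -/

import Mathlib

universe u

/-- A semiring in the sense of the paper: a (nonempty) set with an associative
commutative addition and an associative multiplication distributing over
addition from both sides.  No additive or multiplicative identity is assumed. -/
class PaperSemiring (S : Type*) extends Add S, Mul S where
  add_assoc : ∀ a b c : S, a + b + c = a + (b + c)
  add_comm : ∀ a b : S, a + b = b + a
  mul_assoc : ∀ a b c : S, a * b * c = a * (b * c)
  left_distrib : ∀ a b c : S, a * (b + c) = a * b + a * c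
  right_distrib : ∀ a b c : S, (a + b) * c = a * c + b * c

/-- `nfoldAdd n x` is the `n`-fold sum `x + ⋯ + x` (only meaningful for `n ≥ 1`;
we set `nfoldAdd 0 x = x` as a junk value). -/
def nfoldAdd {S : Type*} [Add S] : ℕ → S → S
  | 0, x => x
  | 1, x => x
  | n + 2, x => nfoldAdd (n + 1) x + x

/-- `nfoldMul n x` is the `n`-fold product `x * ⋯ * x` (only meaningful for `n ≥ 1`;
we set `nfoldMul 0 x = x` as a junk value). -/
def nfoldMul {S : Type*} [Mul S] : ℕ → S → S
  | 0, x => x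
  | 1, x => x
  | n + 2, x => nfoldMul (n + 1) x * x

/-- `w` is multiplicatively absorbing. -/
def MulAbsorbing {S : Type*} [Mul S] (w : S) : Prop :=
  ∀ x : S, x * w = w ∧ w * x = w

/-- `w` is a zero element: multiplicatively absorbing and additively neutral. -/
def IsZeroElem {S : Type*} [Add S] [Mul S] (w : S) : Prop :=
  MulAbsorbing w ∧ ∀ x : S, x + w = x

/-- `w` is bi-absorbing: multiplicatively and additively absorbing. -/
def BiAbsorbing {S : Type*} [Add S] [Mul S] (w : S) : Prop :=
  MulAbsorbing w ∧ ∀ x : S, x + w = w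

/-- `I` is an ideal: nonempty, `I+I ⊆ I`, `S·I ⊆ I`, `I·S ⊆ I`. -/
def IsIdealSet {S : Type*} [Add S] [Mul S] (I : Set S) : Prop :=
  I.Nonempty ∧ (∀ a ∈ I, ∀ b ∈ I, a + b ∈ I) ∧
    ∀ s : S, ∀ a ∈ I, s * a ∈ I ∧ a * s ∈ I

/-- `I` is a bi-ideal: nonempty, `S+I ⊆ I`, `S·I ⊆ I`, `I·S ⊆ I`. -/
def IsBiIdealSet {S : Type*} [Add S] [Mul S] (I : Set S) : Prop :=
  I.Nonempty ∧ (∀ s : S, ∀ a ∈ I, s + a ∈ I) ∧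
    ∀ s : S, ∀ a ∈ I, s * a ∈ I ∧ a * s ∈ I

/-- The relation `α_I`:  `(x,y) ∈ α_I` iff `x + a = y + b` for some `a, b ∈ I`. -/
def alphaRel {S : Type*} [Add S] (I : Set S) (x y : S) : Prop :=
  ∃ a ∈ I, ∃ b ∈ I, x + a = y + b

/-- The relation `β_J = (J×J) ∪ id`. -/
def betaRel {S : Type*} (J : Set S) (x y : S) : Prop :=
  (x ∈ J ∧ y ∈ J) ∨ x = y

/-- The relation `γ_n`: `(x,y) ∈ γ_n` iff `n·x = n·y`. -/
def gammaRel {S : Type*} [Add S] (n : ℕ) (x y : S) : Prop :=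
  nfoldAdd n x = nfoldAdd n y

/-- The relation `δ`: `(x,y) ∈ δ` iff `2^i·x = y + u` and `2^i·y = x + v` for
some `i ≥ 0` and `u, v ∈ S`. -/
def deltaRel {S : Type*} [Add S] (x y : S) : Prop :=
  ∃ (i : ℕ) (u v : S), nfoldAdd (2 ^ i) x = y + u ∧ nfoldAdd (2 ^ i) y = x + v

/-- A congruence: an equivalence relation compatible with both operations. -/
def IsCongruence {S : Type*} [Add S] [Mul S] (r : S → S → Prop) : Prop :=
  Equivalence r ∧ (∀ x x' y y' : S, r x x' → r y y' → r (x + y) (x' + y')) ∧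
    ∀ x x' y y' : S, r x x' → r y y' → r (x * y) (x' * y')

/-- `S` is congruence-simple: it has just two congruences (the identity relation
and the full relation, which are distinct). -/
def CongSimple (S : Type*) [Add S] [Mul S] : Prop :=
  (∃ x y : S, x ≠ y) ∧
    ∀ r : S → S → Prop, IsCongruence r → (∀ x y, r x y ↔ x = y) ∨ ∀ x y, r x y

/-- The two-element semiring `𝕋₄`. -/
inductive T4 : Type where | a | b

instance : Add T4 := ⟨fun x y => match x, y with | .a, .a => .a | _, _ => .b⟩
instance : Mul T4 := ⟨fun x y => match x, y with | .b, .b => .b | _, _ => .a⟩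

/-- The two-element semiring `𝕋₈`. -/
inductive T8 : Type where | a | b

instance : Add T8 := ⟨fun _ _ => .a⟩
instance : Mul T8 := ⟨fun x y => match x, y with | .b, .b => .b | _, _ => .a⟩

/-- Isomorphism of semirings (as sets with two binary operations). -/
def SIso (S T : Type*) [Add S] [Mul S] [Add T] [Mul T] : Prop :=
  ∃ f : S ≃ T, (∀ x y : S, f (x + y) = f x + f y) ∧ ∀ x y : S, f (x * y) = f x * f y

/-- Addition of the semiring `V(G)` on `Option G` (`none` plays the role of `o`):
`x + x = x` and `x + y = o` for `x ≠ y`. -/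
noncomputable def vAdd {G : Type*} (x y : Option G) : Option G :=
  haveI := Classical.decEq (Option G)
  if x = y then x else none

/-- Multiplication of the semiring `V(G)` on `Option G`: it extends the one of `G`,
and `o` is multiplicatively absorbing. -/
def vMul {G : Type*} [Mul G] : Option G → Option G → Option G
  | some x, some y => some (x * y)
  | _, _ => none

/-!
Cancellation `x + z = y + z` propagates to `n·x + z = n·y + z`. Since `δ` relates `x` and `y` to
`z`, for `N` a large enough power of two both `N·x` and `N·y` are of the form `z + w`; absorbing
`z` into them gives `2N·x = 2N·y`, and `γ_2 = id` lets us halve the coefficient back down to `x = y`.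
-/

instance PaperSemiring.toAddCommSemigroup {S : Type*} [PaperSemiring S] : AddCommSemigroup S where
  add_assoc := PaperSemiring.add_assoc
  add_comm := PaperSemiring.add_comm

section AddSemigroup

variable {S : Type*} [AddSemigroup S]

theorem nfoldAdd_succ (x : S) {n : ℕ} (hn : 1 ≤ n) : nfoldAdd (n + 1) x = nfoldAdd n x + x := by
  obtain ⟨k, rfl⟩ := Nat.exists_eq_add_of_le' hn
  rfl

theorem nfoldAdd_add (x : S) {m n : ℕ} (hm : 1 ≤ m) (hn : 1 ≤ n) :
    nfoldAdd (m + n) x = nfoldAdd m x + nfoldAdd n x := by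
  induction n, hn using Nat.le_induction with
  | base => exact nfoldAdd_succ x hm
  | succ n hn ih =>
    rw [← add_assoc, nfoldAdd_succ x (by omega), ih, nfoldAdd_succ x hn, add_assoc]

theorem nfoldAdd_two_pow_succ (x : S) (l : ℕ) :
    nfoldAdd (2 ^ (l + 1)) x = nfoldAdd (2 ^ l) x + nfoldAdd (2 ^ l) x := by
  rw [pow_succ, mul_two, nfoldAdd_add x Nat.one_le_two_pow Nat.one_le_two_pow]

theorem eq_of_nfoldAdd_two_pow_eq (h2 : ∀ a b : S, a + a = b + b → a = b) {x y : S} (l : ℕ)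
    (h : nfoldAdd (2 ^ l) x = nfoldAdd (2 ^ l) y) : x = y := by
  induction l with
  | zero => exact h
  | succ l ih =>
    rw [nfoldAdd_two_pow_succ, nfoldAdd_two_pow_succ] at h
    exact ih (h2 _ _ h)

theorem exists_nfoldAdd_two_pow_eq_add {x z u : S} {i : ℕ} (hu : nfoldAdd (2 ^ i) x = z + u)
    {l : ℕ} (hl : i ≤ l) : ∃ w, nfoldAdd (2 ^ l) x = z + w := by
  induction l, hl using Nat.le_induction with
  | base => exact ⟨u, hu⟩
  | succ l _ ih =>
    obtain ⟨w, hw⟩ := ih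
    exact ⟨w + nfoldAdd (2 ^ l) x, by rw [nfoldAdd_two_pow_succ, hw, add_assoc]⟩

end AddSemigroup

section AddCommSemigroup

variable {S : Type*} [AddCommSemigroup S]

theorem nfoldAdd_add_eq_of_add_eq {x y z : S} (h : x + z = y + z) (n : ℕ) :
    nfoldAdd n x + z = nfoldAdd n y + z := by
  induction n with
  | zero => exact h
  | succ n ih =>
    rcases Nat.eq_zero_or_pos n with rfl | hn
    · exact h
    calc nfoldAdd (n + 1) x + z = (nfoldAdd n x + z) + x := by
          rw [nfoldAdd_succ x hn, add_right_comm]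
      _ = nfoldAdd n y + (x + z) := by rw [ih, add_assoc, add_comm z]
      _ = nfoldAdd (n + 1) y + z := by rw [h, ← add_assoc, nfoldAdd_succ y hn]

theorem add_self_eq_add_self_of_add_eq_add {a b z w w' : S} (h : a + z = b + z)
    (ha : a = z + w) (hb : b = z + w') : a + a = b + b :=
  calc a + a = (a + z) + w := by rw [add_assoc, ← ha]
    _ = b + a := by rw [h, add_assoc, ← ha]
    _ = (a + z) + w' := by rw [add_assoc, ← hb, add_comm]
    _ = b + b := by rw [h, add_assoc, ← hb]

end AddCommSemigroup

/-- Let `S` be a semiring.  If `γ_2 = id_S` and `δ = S×S`, then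
`S` is additively cancellative. -/
theorem stmt_5 {S : Type*} [PaperSemiring S]
    (h2 : ∀ x y : S, gammaRel 2 x y ↔ x = y) (hd : ∀ x y : S, deltaRel x y) :
    ∀ x y z : S, x + z = y + z → x = y := by
  intro x y z hxz
  obtain ⟨i, u, -, hu, -⟩ := hd x z
  obtain ⟨j, u', -, hu', -⟩ := hd y z
  obtain ⟨w, hw⟩ := exists_nfoldAdd_two_pow_eq_add hu (le_max_left i j)
  obtain ⟨w', hw'⟩ := exists_nfoldAdd_two_pow_eq_add hu' (le_max_right i j)
  refine eq_of_nfoldAdd_two_pow_eq (fun a b => (h2 a b).mp) (max i j + 1) ?_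
  rw [nfoldAdd_two_pow_succ, nfoldAdd_two_pow_succ]
  exact add_self_eq_add_self_of_add_eq_add (nfoldAdd_add_eq_of_add_eq hxz _) hw hw'
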